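/- arXiv:2404.13531 — 5 statements merged into one kernel-verified Lean document; each statement's English description precedes it below -/
import Mathlib

section
/- Let E, A ∈ ℝ^{n×n} with E^T = E positive semidefinite, A = −A^T, and suppose the nullspaces satisfy N(E) ∩ N(A) = {0} (so that E − A is invertible). Then the generalized Cayley transform C(E,A) = (E − A)^{-1}(E + A) is an isometry of the energy seminorm: ‖C(E,A) x‖_E = ‖x‖_E for all x ∈ ℝ^n. -/
open Matrix

/-- The generalized Cayley transform `C(E,A) = (E - A)⁻¹ (E + A)` (with `E` symmetric
positive semidefinite, `A` skew-symmetric, trivially intersecting nullspaces) is an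
isometry of the energy seminorm `‖x‖_E = (xᵀ E x)^(1/2)`. -/
theorem cayley_transform_energy_isometry {n : ℕ}
    (E A : Matrix (Fin n) (Fin n) ℝ)
    (hE : Eᵀ = E) (hEpsd : E.PosSemidef) (hA : A = -Aᵀ)
    (hker : ∀ v : Fin n → ℝ, E.mulVec v = 0 → A.mulVec v = 0 → v = 0) :
    ∀ x : Fin n → ℝ,
      Real.sqrt ((((E - A)⁻¹ * (E + A)).mulVec x) ⬝ᵥ E.mulVec (((E - A)⁻¹ * (E + A)).mulVec x)) =
        Real.sqrt (x ⬝ᵥ E.mulVec x) := by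
  -- skew-symmetry: v ⬝ᵥ A v = 0
  have hskew : ∀ v : Fin n → ℝ, v ⬝ᵥ A.mulVec v = 0 := by
    intro v
    have h1 : v ⬝ᵥ A.mulVec v = Aᵀ.mulVec v ⬝ᵥ v := by
      rw [dotProduct_mulVec, ← mulVec_transpose]
    have hAT : Aᵀ = -A := by conv_rhs => rw [hA, neg_neg]
    rw [hAT, neg_mulVec, neg_dotProduct] at h1
    have h3 := dotProduct_comm v (A.mulVec v)
    linarith
  -- symmetry of E for dot products
  have hsymm : ∀ u v : Fin n → ℝ, u ⬝ᵥ E.mulVec v = v ⬝ᵥ E.mulVec u := by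
    intro u v
    rw [dotProduct_mulVec, ← mulVec_transpose, hE, dotProduct_comm]
  -- E - A is invertible
  have hdet : IsUnit (E - A).det := by
    by_contra h
    have hdet0 : (E - A).det = 0 := by
      simpa [isUnit_iff_ne_zero] using h
    obtain ⟨v, hvne, hv0⟩ := (Matrix.exists_mulVec_eq_zero_iff).2 hdet0
    have hEv : E.mulVec v - A.mulVec v = 0 := by
      simpa [sub_mulVec] using hv0
    have hEA : E.mulVec v = A.mulVec v := by
      have := sub_eq_zero.mp hEv; exact this
    have hq : v ⬝ᵥ E.mulVec v = 0 := by rw [hEA]; exact hskew v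
    have hq' : star v ⬝ᵥ E.mulVec v = 0 := by simpa using hq
    have hE0 : E.mulVec v = 0 := (hEpsd.dotProduct_mulVec_zero_iff v).mp hq'
    have hA0 : A.mulVec v = 0 := by rw [← hEA]; exact hE0
    exact hvne (hker v hE0 hA0)
  intro x
  set y : Fin n → ℝ := ((E - A)⁻¹ * (E + A)).mulVec x with hy
  -- (E - A) y = (E + A) x
  have hkey : (E - A).mulVec y = (E + A).mulVec x := by
    rw [hy, mulVec_mulVec, ← Matrix.mul_assoc, Matrix.mul_nonsing_inv _ hdet, Matrix.one_mul]
  have hkey' : E.mulVec y - A.mulVec y = E.mulVec x + A.mulVec x := by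
    have h1 := hkey
    rwa [sub_mulVec, add_mulVec] at h1
  -- E (y - x) = A (y + x)
  have hEyx : E.mulVec (y - x) = A.mulVec (y + x) := by
    rw [mulVec_sub, mulVec_add]
    have : E.mulVec y - E.mulVec x - (A.mulVec y + A.mulVec x) = 0 := by
      have := hkey'
      abel_nf
      abel_nf at this
      linear_combination (norm := module) this
    linear_combination (norm := module) this
  have hmain : y ⬝ᵥ E.mulVec y = x ⬝ᵥ E.mulVec x := by
    have h0 : (y + x) ⬝ᵥ E.mulVec (y - x) = 0 := by
      rw [hEyx]; exact hskew (y + x)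
    have hexp : (y + x) ⬝ᵥ E.mulVec (y - x)
        = y ⬝ᵥ E.mulVec y - x ⬝ᵥ E.mulVec x
          + (x ⬝ᵥ E.mulVec y - y ⬝ᵥ E.mulVec x) := by
      simp only [mulVec_sub, add_dotProduct, dotProduct_sub]
      ring
    rw [hexp, hsymm x y] at h0
    linarith
  rw [hmain]
end

section
/- Let E, A ∈ ℝ^{n×n} with E^T = E positive semidefinite, A + A^T negative semidefinite, and suppose the nullspaces satisfy N(E) ∩ N(A) = {0}. Then E − A is invertible, the generalized Cayley transform C(E,A) = (E − A)^{-1}(E + A) satisfies C(E,A)^T · E · C(E,A) ≤ E in the Loewner order (i.e., E − C(E,A)^T E C(E,A) is positive semidefinite), and consequently ‖C(E,A) x‖_E ≤ ‖x‖_E for all x ∈ ℝ^n. -/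
/-!
Write `y = C x` with `C = (E - A)⁻¹ (E + A)`. Then `(E - A) y = (E + A) x`, i.e.
`E (y - x) = A (y + x)`, and pairing with `y + x` (using `Eᵀ = E`) gives
`yᵀ E y - xᵀ E x = (y + x)ᵀ A (y + x) ≤ 0`. The same pairing applied to a kernel vector `v` of
`E - A` gives `vᵀ E v = vᵀ A v ≤ 0`, so `E v = 0 = A v`, whence `v = 0`.
-/

open Matrix

variable {ι : Type*} [Fintype ι]

noncomputable def cayleyTransform [DecidableEq ι] (E A : Matrix ι ι ℝ) : Matrix ι ι ℝ :=
  (E - A)⁻¹ * (E + A)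

lemma dotProduct_mulVec_nonpos_of_posSemidef_neg_add_transpose {A : Matrix ι ι ℝ}
    (hA : (-(A + Aᵀ)).PosSemidef) (v : ι → ℝ) : v ⬝ᵥ A *ᵥ v ≤ 0 := by
  have h := hA.dotProduct_mulVec_nonneg v
  rw [star_trivial, neg_mulVec, dotProduct_neg, add_mulVec, dotProduct_add,
    dotProduct_transpose_mulVec] at h
  linarith

lemma Matrix.IsHermitian.dotProduct_mulVec_comm {E : Matrix ι ι ℝ} (hE : E.IsHermitian)
    (u w : ι → ℝ) : u ⬝ᵥ E *ᵥ w = w ⬝ᵥ E *ᵥ u := by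
  rw [← dotProduct_transpose_mulVec, ← conjTranspose_eq_transpose_of_trivial, hE]

lemma isUnit_sub_of_posSemidef [DecidableEq ι] {E A : Matrix ι ι ℝ} (hE : E.PosSemidef)
    (hA : (-(A + Aᵀ)).PosSemidef) (hker : ∀ v : ι → ℝ, E *ᵥ v = 0 → A *ᵥ v = 0 → v = 0) :
    IsUnit (E - A) := by
  refine mulVec_injective_iff_isUnit.mp ((injective_iff_map_eq_zero (E - A).mulVecLin).mpr ?_)
  intro v hv
  have hEA : E *ᵥ v = A *ᵥ v := sub_eq_zero.mp (by rwa [mulVecLin_apply, sub_mulVec] at hv)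
  have hEv : E *ᵥ v = 0 := by
    refine (hE.dotProduct_mulVec_zero_iff v).mp (le_antisymm ?_ (hE.dotProduct_mulVec_nonneg v))
    rw [star_trivial, hEA]
    exact dotProduct_mulVec_nonpos_of_posSemidef_neg_add_transpose hA v
  exact hker v hEv (hEA ▸ hEv)

lemma dotProduct_mulVec_sub_eq_of_sub_mulVec_eq {E A : Matrix ι ι ℝ} (hE : E.IsHermitian)
    {x y : ι → ℝ} (hxy : (E - A) *ᵥ y = (E + A) *ᵥ x) :
    y ⬝ᵥ E *ᵥ y - x ⬝ᵥ E *ᵥ x = (y + x) ⬝ᵥ A *ᵥ (y + x) := by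
  have hEA : E *ᵥ (y - x) = A *ᵥ (y + x) := by
    rw [← sub_eq_zero, ← sub_eq_zero.mpr hxy]
    simp only [mulVec_sub, mulVec_add, sub_mulVec, add_mulVec]
    abel
  rw [← hEA, mulVec_sub, dotProduct_sub, add_dotProduct, add_dotProduct,
    hE.dotProduct_mulVec_comm x y]
  ring

lemma dotProduct_mulVec_cayleyTransform_le [DecidableEq ι] {E A : Matrix ι ι ℝ}
    (hE : E.IsHermitian) (hA : (-(A + Aᵀ)).PosSemidef) (hunit : IsUnit (E - A)) (x : ι → ℝ) :
    cayleyTransform E A *ᵥ x ⬝ᵥ E *ᵥ (cayleyTransform E A *ᵥ x) ≤ x ⬝ᵥ E *ᵥ x := by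
  have hxy : (E - A) *ᵥ (cayleyTransform E A *ᵥ x) = (E + A) *ᵥ x := by
    rw [mulVec_mulVec, cayleyTransform,
      mul_nonsing_inv_cancel_left _ _ ((isUnit_iff_isUnit_det _).mp hunit)]
  have := dotProduct_mulVec_sub_eq_of_sub_mulVec_eq hE hxy
  linarith [dotProduct_mulVec_nonpos_of_posSemidef_neg_add_transpose hA
    (cayleyTransform E A *ᵥ x + x)]

lemma posSemidef_sub_transpose_mul_mul_of_dotProduct_mulVec_le {E C : Matrix ι ι ℝ}
    (hE : E.IsHermitian) (hC : ∀ x, C *ᵥ x ⬝ᵥ E *ᵥ (C *ᵥ x) ≤ x ⬝ᵥ E *ᵥ x) :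
    (E - Cᵀ * E * C).PosSemidef := by
  rw [← conjTranspose_eq_transpose_of_trivial]
  refine .of_dotProduct_mulVec_nonneg (hE.sub (isHermitian_conjTranspose_mul_mul C hE)) fun x ↦ ?_
  rw [star_trivial, sub_mulVec, dotProduct_sub, ← mulVec_mulVec, ← mulVec_mulVec,
    dotProduct_mulVec x Cᴴ, conjTranspose_eq_transpose_of_trivial, vecMul_transpose]
  linarith [hC x]

theorem cayley_transform_energy_dissipative_general {n : ℕ}
    (E A : Matrix (Fin n) (Fin n) ℝ)
    (hEpsd : E.PosSemidef) (hA : (-(A + Aᵀ)).PosSemidef)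
    (hker : ∀ v : Fin n → ℝ, E.mulVec v = 0 → A.mulVec v = 0 → v = 0) :
    IsUnit (E - A) ∧
    (E - ((E - A)⁻¹ * (E + A))ᵀ * E * ((E - A)⁻¹ * (E + A))).PosSemidef ∧
    ∀ x : Fin n → ℝ,
      Real.sqrt ((((E - A)⁻¹ * (E + A)).mulVec x) ⬝ᵥ E.mulVec (((E - A)⁻¹ * (E + A)).mulVec x)) ≤
        Real.sqrt (x ⬝ᵥ E.mulVec x) := by
  have hunit := isUnit_sub_of_posSemidef hEpsd hA hker
  have henergy := dotProduct_mulVec_cayleyTransform_le hEpsd.isHermitian hA hunit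
  exact ⟨hunit, posSemidef_sub_transpose_mul_mul_of_dotProduct_mulVec_le hEpsd.isHermitian henergy,
    fun x ↦ Real.sqrt_le_sqrt (henergy x)⟩

/-- If `E` is symmetric positive semidefinite, `A + Aᵀ` is negative semidefinite, and the
nullspaces of `E` and `A` intersect trivially, then `E - A` is invertible, the generalized
Cayley transform `C(E,A) = (E - A)⁻¹ (E + A)` satisfies `C(E,A)ᵀ E C(E,A) ≤ E` in the
Loewner order, and `C(E,A)` is nonexpansive in the energy seminorm `‖x‖_E = (xᵀ E x)^(1/2)`. -/
theorem cayley_transform_energy_dissipative {n : ℕ}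
    (E A : Matrix (Fin n) (Fin n) ℝ)
    (hE : Eᵀ = E) (hEpsd : E.PosSemidef) (hA : (-(A + Aᵀ)).PosSemidef)
    (hker : ∀ v : Fin n → ℝ, E.mulVec v = 0 → A.mulVec v = 0 → v = 0) :
    IsUnit (E - A) ∧
    (E - ((E - A)⁻¹ * (E + A))ᵀ * E * ((E - A)⁻¹ * (E + A))).PosSemidef ∧
    ∀ x : Fin n → ℝ,
      Real.sqrt ((((E - A)⁻¹ * (E + A)).mulVec x) ⬝ᵥ E.mulVec (((E - A)⁻¹ * (E + A)).mulVec x)) ≤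
        Real.sqrt (x ⬝ᵥ E.mulVec x) :=
  cayley_transform_energy_dissipative_general E A hEpsd hA hker
end

section
/- Let E, J ∈ ℝ^{n×n} with E^T = E positive semidefinite, J = −J^T, and suppose the nullspaces satisfy N(E) ∩ N(J) = {0}. Then for every h ∈ ℝ with h ≠ 0, both E − (h/2)J and E + (h/2)J are invertible, and the implicit midpoint step x_{n+1} := C(E, (h/2)J) x_n preserves the energy: (1/2) x_{n+1}^T E x_{n+1} = (1/2) x_n^T E x_n for every x_n ∈ ℝ^n. -/
open Matrix

lemma skew_quadratic_zero {n : ℕ} {J : Matrix (Fin n) (Fin n) ℝ} (hJ : J = -Jᵀ)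
    (w : Fin n → ℝ) : w ⬝ᵥ J.mulVec w = 0 := by
  have key : w ⬝ᵥ Jᵀ.mulVec w = w ⬝ᵥ J.mulVec w := by
    rw [mulVec_transpose, dotProduct_comm, ← dotProduct_mulVec]
  have h : w ⬝ᵥ J.mulVec w = -(w ⬝ᵥ J.mulVec w) := by
    nth_rewrite 1 [hJ]
    rw [neg_mulVec, dotProduct_neg, key]
  linarith

lemma aux_unit {n : ℕ} (E J : Matrix (Fin n) (Fin n) ℝ)
    (hEpsd : E.PosSemidef) (hJ : J = -Jᵀ)
    (hker : ∀ v : Fin n → ℝ, E.mulVec v = 0 → J.mulVec v = 0 → v = 0)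
    (c : ℝ) (hc : c ≠ 0) : IsUnit (E + c • J) := by
  rw [Matrix.isUnit_iff_isUnit_det, isUnit_iff_ne_zero]
  intro hdet
  obtain ⟨v, hv, hv0⟩ := (Matrix.exists_mulVec_eq_zero_iff).mpr hdet
  have hq : v ⬝ᵥ (E + c • J).mulVec v = 0 := by rw [hv0, dotProduct_zero]
  rw [add_mulVec, dotProduct_add, smul_mulVec, dotProduct_smul,
    skew_quadratic_zero hJ, smul_zero, add_zero] at hq
  have hEv : E.mulVec v = 0 := by
    have := (hEpsd.dotProduct_mulVec_zero_iff v).mp (by simpa using hq)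
    simpa using this
  have hJv : J.mulVec v = 0 := by
    have : (c • J).mulVec v = 0 := by
      have := hv0
      rw [add_mulVec, hEv, zero_add] at this
      exact this
    rw [smul_mulVec] at this
    have := smul_eq_zero.mp this
    tauto
  exact hv (hker v hEv hJv)

/-- For `E` symmetric positive semidefinite, `J` skew-symmetric with trivially
intersecting nullspaces (regular pencil `{E, J}`), the implicit midpoint rule is
well-defined for any step size `h ≠ 0` (both `E ± (h/2)J` are invertible) and the
midpoint step `x₁ = C(E,(h/2)J) x₀` conserves the energy `H(x) = (1/2) xᵀ E x`. -/
theorem implicit_midpoint_energy_conservation {n : ℕ}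
    (E J : Matrix (Fin n) (Fin n) ℝ)
    (hE : Eᵀ = E) (hEpsd : E.PosSemidef) (hJ : J = -Jᵀ)
    (hker : ∀ v : Fin n → ℝ, E.mulVec v = 0 → J.mulVec v = 0 → v = 0) :
    ∀ h : ℝ, h ≠ 0 →
      IsUnit (E - (h / 2) • J) ∧ IsUnit (E + (h / 2) • J) ∧
      ∀ x₀ : Fin n → ℝ,
        (1 / 2 : ℝ) * ((((E - (h / 2) • J)⁻¹ * (E + (h / 2) • J)).mulVec x₀) ⬝ᵥ
            E.mulVec (((E - (h / 2) • J)⁻¹ * (E + (h / 2) • J)).mulVec x₀)) =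
          (1 / 2 : ℝ) * (x₀ ⬝ᵥ E.mulVec x₀) := by
  intro h hh
  set c : ℝ := h / 2 with hcdef
  have hc0 : c ≠ 0 := div_ne_zero hh two_ne_zero
  have hA : IsUnit (E - c • J) := by
    have := aux_unit E J hEpsd hJ hker (-c) (neg_ne_zero.mpr hc0)
    simpa [sub_eq_add_neg, neg_smul] using this
  have hB : IsUnit (E + c • J) := aux_unit E J hEpsd hJ hker c hc0
  refine ⟨hA, hB, fun x₀ => ?_⟩
  set A := E - c • J with hAdef
  set B := E + c • J with hBdef
  set x₁ := (A⁻¹ * B).mulVec x₀ with hx₁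
  have hAx : A.mulVec x₁ = B.mulVec x₀ := by
    rw [hx₁, mulVec_mulVec, ← mul_assoc,
      Matrix.mul_nonsing_inv A ((Matrix.isUnit_iff_isUnit_det A).mp hA), one_mul]
  have key : E.mulVec (x₁ - x₀) = c • J.mulVec (x₁ + x₀) := by
    rw [hAdef, hBdef, sub_mulVec, add_mulVec, smul_mulVec] at hAx
    rw [mulVec_sub, mulVec_add, smul_add]
    rw [sub_eq_iff_eq_add] at hAx
    rw [hAx, smul_mulVec]
    abel
  have hsym : ∀ u v : Fin n → ℝ, u ⬝ᵥ E.mulVec v = v ⬝ᵥ E.mulVec u := by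
    intro u v
    rw [dotProduct_mulVec, ← mulVec_transpose, hE, dotProduct_comm]
  have expand : x₁ ⬝ᵥ E.mulVec x₁ - x₀ ⬝ᵥ E.mulVec x₀ =
      (x₁ + x₀) ⬝ᵥ E.mulVec (x₁ - x₀) := by
    rw [mulVec_sub, dotProduct_sub, add_dotProduct, add_dotProduct, hsym x₀ x₁]
    ring
  have z : (x₁ + x₀) ⬝ᵥ E.mulVec (x₁ - x₀) = 0 := by
    rw [key, dotProduct_smul, skew_quadratic_zero hJ, smul_zero]
  have hmain : x₁ ⬝ᵥ E.mulVec x₁ = x₀ ⬝ᵥ E.mulVec x₀ := by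
    have := expand.trans z
    linarith
  rw [hmain]
end

section
/- Let E, J, R, K ∈ ℝ^{n×n} with E^T = E positive semidefinite, J = −J^T, R = R^T positive semidefinite, let B ∈ ℝ^{n×m}, let ε ≥ 0, and set E_ε = E + ε K^T K. Let u : ℝ → ℝ^m be continuous and let x : ℝ → ℝ^n be continuously differentiable with E_ε ẋ(s) = (J − R) x(s) + B u(s) for all s, and set y(s) = B^T x(s) and H(x) = (1/2) x^T E x. Then for all t ∈ ℝ and h ≥ 0: H(x(t+h)) − H(x(t)) ≤ ∫_t^{t+h} y(s)^T u(s) ds + (ε/2)·| ‖K x(t+h)‖₂² − ‖K x(t)‖₂² |. -/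
open Matrix

/-!
Since `E_ε = E + ε KᵀK` is symmetric, along a solution
`d/ds (xᵀ E_ε x) = 2 (E_ε ẋ)ᵀ x = 2 (yᵀu - xᵀ R x) ≤ 2 yᵀu`, the skew part `J` contributing nothing.
Integrating gives `H_ε(x(t+h)) - H_ε(x(t)) ≤ ∫ yᵀu`, and `H_ε = H + (ε/2) ‖K x‖₂²` turns this into
the estimate for `H`.
-/

section Derivatives

variable {𝕜 : Type*} [NontriviallyNormedField 𝕜] {ι : Type*} [Fintype ι]
  {f g : 𝕜 → ι → 𝕜} {f' g' : ι → 𝕜} {t : 𝕜}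

theorem HasDerivAt.dotProduct (hf : HasDerivAt f f' t) (hg : HasDerivAt g g' t) :
    HasDerivAt (fun s => f s ⬝ᵥ g s) (f' ⬝ᵥ g t + f t ⬝ᵥ g') t :=
  (HasDerivAt.fun_sum fun i _ =>
    (hasDerivAt_pi.mp hf i).fun_mul (hasDerivAt_pi.mp hg i)).congr_deriv Finset.sum_add_distrib

theorem HasDerivAt.matrix_mulVec {κ : Type*} (M : Matrix κ ι 𝕜) (hf : HasDerivAt f f' t) :
    HasDerivAt (fun s => M *ᵥ f s) (M *ᵥ f') t :=
  hasDerivAt_pi.mpr fun i => by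
    simpa [mulVec] using (hasDerivAt_const t (M i)).dotProduct hf

theorem HasDerivAt.dotProduct_mulVec_self {M : Matrix ι ι 𝕜} (hM : Mᵀ = M)
    (hf : HasDerivAt f f' t) :
    HasDerivAt (fun s => f s ⬝ᵥ M *ᵥ f s) (2 * (M *ᵥ f' ⬝ᵥ f t)) t := by
  convert hf.dotProduct (hf.matrix_mulVec M) using 1
  rw [dotProduct_comm (f t), dotProduct_mulVec, ← mulVec_transpose, hM, two_mul]

end Derivatives

theorem dotProduct_mulVec_self_eq_zero_of_eq_neg_transpose {R ι : Type*} [CommRing R]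
    [IsAddTorsionFree R] [Fintype ι] {J : Matrix ι ι R} (hJ : J = -Jᵀ) (v : ι → R) :
    v ⬝ᵥ J *ᵥ v = 0 := by
  refine self_eq_neg.mp ?_
  conv_lhs => rw [hJ]
  rw [neg_mulVec, dotProduct_neg, mulVec_transpose, dotProduct_comm, ← dotProduct_mulVec]

theorem dotProduct_transpose_mul_mulVec_self {R ι κ : Type*} [CommSemiring R] [Fintype ι]
    [Fintype κ] (K : Matrix κ ι R) (v : ι → R) :
    v ⬝ᵥ (Kᵀ * K) *ᵥ v = K *ᵥ v ⬝ᵥ K *ᵥ v := by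
  rw [← mulVec_mulVec, dotProduct_mulVec, vecMul_transpose]

section PortHamiltonian

variable {ι κ : Type*} [Fintype ι] [Fintype κ]

theorem Matrix.PosSemidef.sub_mulVec_add_mulVec_dotProduct_le {J R : Matrix ι ι ℝ}
    (hR : R.PosSemidef) (hJ : J = -Jᵀ) (B : Matrix ι κ ℝ) (v : ι → ℝ) (w : κ → ℝ) :
    ((J - R) *ᵥ v + B *ᵥ w) ⬝ᵥ v ≤ Bᵀ *ᵥ v ⬝ᵥ w := by
  have hRv : 0 ≤ v ⬝ᵥ R *ᵥ v := by simpa using hR.dotProduct_mulVec_nonneg v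
  have hBw : B *ᵥ w ⬝ᵥ v = Bᵀ *ᵥ v ⬝ᵥ w := by
    rw [dotProduct_comm, dotProduct_mulVec, ← mulVec_transpose]
  rw [add_dotProduct, sub_mulVec, sub_dotProduct, dotProduct_comm (J *ᵥ v),
    dotProduct_mulVec_self_eq_zero_of_eq_neg_transpose hJ, dotProduct_comm (R *ᵥ v), hBw]
  linarith

theorem implicit_phs_energy_increment_le {M J R : Matrix ι ι ℝ} {B : Matrix ι κ ℝ}
    (hM : Mᵀ = M) (hJ : J = -Jᵀ) (hR : R.PosSemidef) {u : ℝ → κ → ℝ} (hu : Continuous u)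
    {x x' : ℝ → ι → ℝ} (hx : ∀ s, HasDerivAt x (x' s) s)
    (hsys : ∀ s, M *ᵥ x' s = (J - R) *ᵥ x s + B *ᵥ u s) {a b : ℝ} (hab : a ≤ b) :
    x b ⬝ᵥ M *ᵥ x b - x a ⬝ᵥ M *ᵥ x a ≤ 2 * ∫ s in a..b, Bᵀ *ᵥ x s ⬝ᵥ u s := by
  have hxc : Continuous x := continuous_iff_continuousAt.2 fun s => (hx s).continuousAt
  have hderiv : ∀ s, HasDerivAt (fun s => x s ⬝ᵥ M *ᵥ x s)
      (2 * (((J - R) *ᵥ x s + B *ᵥ u s) ⬝ᵥ x s)) s := fun s => by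
    simpa only [hsys] using (hx s).dotProduct_mulVec_self hM
  have hpower : Continuous fun s => ((J - R) *ᵥ x s + B *ᵥ u s) ⬝ᵥ x s := by fun_prop
  have hsupply : Continuous fun s => Bᵀ *ᵥ x s ⬝ᵥ u s := by fun_prop
  rw [← intervalIntegral.integral_eq_sub_of_hasDerivAt (fun s _ => hderiv s)
      ((continuous_const.mul hpower).intervalIntegrable a b),
    intervalIntegral.integral_const_mul]
  gcongr
  exact intervalIntegral.integral_mono_on hab (hpower.intervalIntegrable a b)
    (hsupply.intervalIntegrable a b) fun s _ => hR.sub_mulVec_add_mulVec_dotProduct_le hJ B _ _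

end PortHamiltonian

theorem regularized_phs_dissipation_estimate_general {n m : ℕ}
    (E J R K : Matrix (Fin n) (Fin n) ℝ)
    (hE : Eᵀ = E) (hJ : J = -Jᵀ) (hRpsd : R.PosSemidef)
    (B : Matrix (Fin n) (Fin m) ℝ)
    (ε : ℝ) (hε : 0 ≤ ε)
    (u : ℝ → Fin m → ℝ) (hu : Continuous u)
    (x x' : ℝ → Fin n → ℝ)
    (hx : ∀ t, HasDerivAt x (x' t) t)
    (hsys : ∀ s, (E + ε • (Kᵀ * K)).mulVec (x' s) = (J - R).mulVec (x s) + B.mulVec (u s))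
    (y : ℝ → Fin m → ℝ) (hy : ∀ s, y s = Bᵀ.mulVec (x s)) :
    ∀ t : ℝ, ∀ h : ℝ, 0 ≤ h →
      (1 / 2 : ℝ) * (x (t + h) ⬝ᵥ E.mulVec (x (t + h))) -
          (1 / 2 : ℝ) * (x t ⬝ᵥ E.mulVec (x t)) ≤
        (∫ s in t..(t + h), y s ⬝ᵥ u s) +
          (ε / 2) * |(K.mulVec (x (t + h)) ⬝ᵥ K.mulVec (x (t + h))) -
            (K.mulVec (x t) ⬝ᵥ K.mulVec (x t))| := by
  intro t h hh
  have hsymm : (E + ε • (Kᵀ * K))ᵀ = E + ε • (Kᵀ * K) := by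
    rw [transpose_add, hE, transpose_smul, transpose_mul, transpose_transpose]
  have hsplit : ∀ v, v ⬝ᵥ (E + ε • (Kᵀ * K)) *ᵥ v = v ⬝ᵥ E *ᵥ v + ε * (K *ᵥ v ⬝ᵥ K *ᵥ v) :=
    fun v => by
      rw [add_mulVec, dotProduct_add, smul_mulVec, dotProduct_smul, smul_eq_mul,
        dotProduct_transpose_mul_mulVec_self]
  have hbalance := implicit_phs_energy_increment_le hsymm hJ hRpsd hu hx hsys
    (le_add_of_nonneg_right hh : t ≤ t + h)
  simp only [hsplit, ← hy] at hbalance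
  have hK := mul_le_mul_of_nonneg_left
    (neg_le_abs ((K *ᵥ x (t + h) ⬝ᵥ K *ᵥ x (t + h)) - (K *ᵥ x t ⬝ᵥ K *ᵥ x t))) hε
  linarith

/-- Dissipation estimate for the ε-regularized pH-system
`E_ε ẋ = (J - R) x + B u` with `E_ε = E + ε Kᵀ K`: for the Hamiltonian
`H(x) = (1/2) xᵀ E x` of the original system one has
`H(x(t+h)) - H(x(t)) ≤ ∫_t^{t+h} y(s)ᵀ u(s) ds + (ε/2)·|‖K x(t+h)‖₂² - ‖K x(t)‖₂²|`. -/
theorem regularized_phs_dissipation_estimate {n m : ℕ}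
    (E J R K : Matrix (Fin n) (Fin n) ℝ)
    (hE : Eᵀ = E) (hEpsd : E.PosSemidef) (hJ : J = -Jᵀ) (hR : Rᵀ = R) (hRpsd : R.PosSemidef)
    (B : Matrix (Fin n) (Fin m) ℝ)
    (ε : ℝ) (hε : 0 ≤ ε)
    (u : ℝ → Fin m → ℝ) (hu : Continuous u)
    (x x' : ℝ → Fin n → ℝ)
    (hx : ∀ t, HasDerivAt x (x' t) t) (hx' : Continuous x')
    (hsys : ∀ s, (E + ε • (Kᵀ * K)).mulVec (x' s) = (J - R).mulVec (x s) + B.mulVec (u s))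
    (y : ℝ → Fin m → ℝ) (hy : ∀ s, y s = Bᵀ.mulVec (x s)) :
    ∀ t : ℝ, ∀ h : ℝ, 0 ≤ h →
      (1 / 2 : ℝ) * (x (t + h) ⬝ᵥ E.mulVec (x (t + h))) -
          (1 / 2 : ℝ) * (x t ⬝ᵥ E.mulVec (x t)) ≤
        (∫ s in t..(t + h), y s ⬝ᵥ u s) +
          (ε / 2) * |(K.mulVec (x (t + h)) ⬝ᵥ K.mulVec (x (t + h))) -
            (K.mulVec (x t) ⬝ᵥ K.mulVec (x t))| :=
  regularized_phs_dissipation_estimate_general E J R K hE hJ hRpsd B ε hε u hu x x' hx hsys y hy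
end

section
/- Let E, J, R ∈ ℝ^{n×n} with E^T = E positive semidefinite, J = −J^T, R = R^T positive semidefinite, and suppose the nullspaces satisfy N(E) ∩ N(J − R) = {0}. Then for every h > 0, the matrix E − (h/2)(J − R) is invertible, and the implicit midpoint step x_{n+1} := C(E, (h/2)(J − R)) x_n applied to the homogeneous pH-DAE E ẋ = (J − R)x dissipates the energy: x_{n+1}^T E x_{n+1} ≤ x_n^T E x_n for every x_n ∈ ℝ^n. -/
/-!
Write `A = (h/2)(J - R)`. Skew-symmetry of `J` and `R ≥ 0` make `A` dissipative, `vᵀ A v ≤ 0`.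
If `(E - A) v = 0` then `vᵀ E v = vᵀ A v`, with the left side `≥ 0` and the right side `≤ 0`, so
both vanish; then `E v = 0` (as `E ≥ 0`), hence `A v = 0`, and `v = 0`. For the energy, the step
`(E - A) x₁ = (E + A) x₀` reads `E (x₁ - x₀) = A (x₁ + x₀)`, so by symmetry of `E`
`x₁ᵀ E x₁ - x₀ᵀ E x₀ = (x₁ + x₀)ᵀ E (x₁ - x₀) = (x₁ + x₀)ᵀ A (x₁ + x₀) ≤ 0`.
-/

open Matrix

section

variable {ι : Type*} [Fintype ι]

def IsDissipative (A : Matrix ι ι ℝ) : Prop := ∀ v : ι → ℝ, v ⬝ᵥ A *ᵥ v ≤ 0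

/-- The generalized Cayley transform `C(E, A)`; it is junk unless `E - A` is invertible. -/
noncomputable def cayley [DecidableEq ι] (E A : Matrix ι ι ℝ) : Matrix ι ι ℝ :=
  (E - A)⁻¹ * (E + A)

lemma dotProduct_mulVec_self_eq_zero_of_transpose_eq_neg {J : Matrix ι ι ℝ} (hJ : Jᵀ = -J)
    (v : ι → ℝ) : v ⬝ᵥ J *ᵥ v = 0 := by
  have h := dotProduct_transpose_mulVec J v v
  rw [hJ, neg_mulVec, dotProduct_neg] at h
  linarith

lemma isDissipative_smul_sub {J R : Matrix ι ι ℝ} (hJ : Jᵀ = -J) (hR : R.PosSemidef)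
    {c : ℝ} (hc : 0 ≤ c) : IsDissipative (c • (J - R)) := by
  intro v
  have hRv : 0 ≤ v ⬝ᵥ R *ᵥ v := by simpa using hR.dotProduct_mulVec_nonneg v
  rw [smul_mulVec, dotProduct_smul, sub_mulVec, dotProduct_sub,
    dotProduct_mulVec_self_eq_zero_of_transpose_eq_neg hJ, smul_eq_mul]
  nlinarith

lemma isUnit_sub_of_isDissipative [DecidableEq ι] {E A : Matrix ι ι ℝ} (hE : E.PosSemidef)
    (hA : IsDissipative A) (hker : ∀ v : ι → ℝ, E *ᵥ v = 0 → A *ᵥ v = 0 → v = 0) :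
    IsUnit (E - A) := by
  refine mulVec_injective_iff_isUnit.mp <| (injective_iff_map_eq_zero (E - A).mulVecLin).mpr ?_
  intro v hv
  simp only [mulVecLin_apply] at hv
  have hEv : 0 ≤ v ⬝ᵥ E *ᵥ v := by simpa using hE.dotProduct_mulVec_nonneg v
  have hquad : v ⬝ᵥ E *ᵥ v - v ⬝ᵥ A *ᵥ v = 0 := by
    rw [← dotProduct_sub, ← sub_mulVec, hv, dotProduct_zero]
  have hEquad : v ⬝ᵥ E *ᵥ v = 0 := by linarith [hA v]
  have hEv0 : E *ᵥ v = 0 := (hE.dotProduct_mulVec_zero_iff v).mp (by simpa using hEquad)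
  refine hker v hEv0 ?_
  rwa [sub_mulVec, hEv0, zero_sub, neg_eq_zero] at hv

lemma mulVec_cayley_sub [DecidableEq ι] {E A : Matrix ι ι ℝ} (hu : IsUnit (E - A)) (x : ι → ℝ) :
    E *ᵥ (cayley E A *ᵥ x - x) = A *ᵥ (cayley E A *ᵥ x + x) := by
  have h : (E - A) *ᵥ (cayley E A *ᵥ x) = (E + A) *ᵥ x := by
    rw [cayley, mulVec_mulVec, ← Matrix.mul_assoc,
      mul_nonsing_inv _ ((isUnit_iff_isUnit_det _).mp hu), Matrix.one_mul]
  rw [sub_mulVec, add_mulVec] at h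
  rw [mulVec_sub, mulVec_add]
  linear_combination h

lemma dotProduct_mulVec_sub_of_isSymm {E : Matrix ι ι ℝ} (hE : E.IsSymm) (y x : ι → ℝ) :
    y ⬝ᵥ E *ᵥ y - x ⬝ᵥ E *ᵥ x = (y + x) ⬝ᵥ E *ᵥ (y - x) := by
  have h := dotProduct_transpose_mulVec E x y
  rw [hE.eq] at h
  rw [mulVec_sub, dotProduct_sub, add_dotProduct, add_dotProduct]
  linarith

theorem dotProduct_mulVec_cayley_le [DecidableEq ι] {E A : Matrix ι ι ℝ} (hE : E.IsSymm)
    (hA : IsDissipative A) (hu : IsUnit (E - A)) (x : ι → ℝ) :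
    cayley E A *ᵥ x ⬝ᵥ E *ᵥ (cayley E A *ᵥ x) ≤ x ⬝ᵥ E *ᵥ x := by
  have h := dotProduct_mulVec_sub_of_isSymm hE (cayley E A *ᵥ x) x
  rw [mulVec_cayley_sub hu] at h
  linarith [hA (cayley E A *ᵥ x + x)]

end

theorem implicit_midpoint_energy_dissipation_general {n : ℕ}
    (E J R : Matrix (Fin n) (Fin n) ℝ)
    (hEpsd : E.PosSemidef) (hJ : J = -Jᵀ) (hRpsd : R.PosSemidef)
    (hker : ∀ v : Fin n → ℝ, E.mulVec v = 0 → (J - R).mulVec v = 0 → v = 0) :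
    ∀ h : ℝ, 0 < h →
      IsUnit (E - (h / 2) • (J - R)) ∧
      ∀ x₀ : Fin n → ℝ,
        (((E - (h / 2) • (J - R))⁻¹ * (E + (h / 2) • (J - R))).mulVec x₀) ⬝ᵥ
            E.mulVec (((E - (h / 2) • (J - R))⁻¹ * (E + (h / 2) • (J - R))).mulVec x₀) ≤
          x₀ ⬝ᵥ E.mulVec x₀ := by
  intro h hh
  have hA : IsDissipative ((h / 2) • (J - R)) :=
    isDissipative_smul_sub (neg_eq_iff_eq_neg.mp hJ.symm) hRpsd (by positivity)
  have hu : IsUnit (E - (h / 2) • (J - R)) := by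
    refine isUnit_sub_of_isDissipative hEpsd hA fun v hEv hAv => hker v hEv ?_
    rw [smul_mulVec, smul_eq_zero] at hAv
    exact hAv.resolve_left (by positivity)
  exact ⟨hu, dotProduct_mulVec_cayley_le (isHermitian_iff_isSymm.mp hEpsd.isHermitian) hA hu⟩

/-- For `E` symmetric positive semidefinite, `J` skew-symmetric, `R` symmetric
positive semidefinite, with trivially intersecting nullspaces of `E` and `J - R`,
the implicit midpoint step for `E ẋ = (J - R) x` is well-defined for every `h > 0`
and dissipates the energy: with `x₁ = C(E, (h/2)(J-R)) x₀` one has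
`x₁ᵀ E x₁ ≤ x₀ᵀ E x₀`. -/
theorem implicit_midpoint_energy_dissipation {n : ℕ}
    (E J R : Matrix (Fin n) (Fin n) ℝ)
    (hE : Eᵀ = E) (hEpsd : E.PosSemidef) (hJ : J = -Jᵀ) (hR : Rᵀ = R) (hRpsd : R.PosSemidef)
    (hker : ∀ v : Fin n → ℝ, E.mulVec v = 0 → (J - R).mulVec v = 0 → v = 0) :
    ∀ h : ℝ, 0 < h →
      IsUnit (E - (h / 2) • (J - R)) ∧
      ∀ x₀ : Fin n → ℝ,
        (((E - (h / 2) • (J - R))⁻¹ * (E + (h / 2) • (J - R))).mulVec x₀) ⬝ᵥ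
            E.mulVec (((E - (h / 2) • (J - R))⁻¹ * (E + (h / 2) • (J - R))).mulVec x₀) ≤
          x₀ ⬝ᵥ E.mulVec x₀ :=
  implicit_midpoint_energy_dissipation_general E J R hEpsd hJ hRpsd hker
end
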